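/- arXiv:0707.3051 — 4 statements merged into one kernel-verified Lean document; each statement's English description precedes it below -/
import Mathlib

section
/- (Duality of comultiplication and multiplication via the trace) For all x, y, z ∈ A, applying to Δ(x) the R-linear map A ⊗_R A → R induced by u ⊗ v ↦ ε(u·y)·ε(v·z) yields ε(x·y·z). -/
open Polynomial TensorProduct

/-- `R = ℤ[i][a]`: the polynomial ring in one variable (called `a`, the
indeterminate `Polynomial.X`) over the Gaussian integers `ℤ[i]`. -/
noncomputable abbrev GaussR : Type := Polynomial GaussianInt

/-- The polynomial `X² − a` over `R = ℤ[i][a]`. -/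
noncomputable def sl2Poly : Polynomial GaussR := X ^ 2 - C X

/-- `A = R[X]/(X² − a)`. -/
noncomputable abbrev sl2A : Type := AdjoinRoot sl2Poly

/-! Since `root ^ 2 = a`, every element of `A` is `c • 1 + d • root`, and `ε` reads off `d`.
Both sides are `R`-linear in `x`, so it suffices to take `x = 1` and `x = root`; writing `y` and `z`
in coordinates, both sides are then `y₀ z₁ + y₁ z₀`, respectively `y₀ z₀ + a y₁ z₁`. -/

namespace AdjoinRoot

variable {R : Type*} [CommRing R] (a : R)

theorem root_mul_self_of_X_sq_sub_C :
    root (X ^ 2 - C a) * root (X ^ 2 - C a) = a • 1 := by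
  have h := eval₂_root (X ^ 2 - C a)
  rw [← sq, Algebra.smul_def, mul_one, algebraMap_eq, ← sub_eq_zero]
  simpa using h

theorem exists_eq_smul_one_add_smul_root (p : AdjoinRoot (X ^ 2 - C a)) :
    ∃ c d : R, p = c • 1 + d • root (X ^ 2 - C a) := by
  induction p using AdjoinRoot.induction_on with | ih q => ?_
  induction q using Polynomial.induction_on with
  | C c => exact ⟨c, 0, by simp [Algebra.smul_def]⟩
  | add p q hp hq =>
    obtain ⟨c, d, hp⟩ := hp
    obtain ⟨c', d', hq⟩ := hq
    exact ⟨c + c', d + d', by rw [map_add, hp, hq]; module⟩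
  | monomial n c ih =>
    obtain ⟨c', d', h⟩ := ih
    refine ⟨a * d', c', ?_⟩
    rw [pow_succ (X : R[X]) n, ← mul_assoc, map_mul, h, mk_X, add_mul, smul_mul_assoc,
      smul_mul_assoc, one_mul, root_mul_self_of_X_sq_sub_C, smul_smul]
    module

theorem root_mul_smul_one_add_smul_root (c d : R) :
    root (X ^ 2 - C a) * (c • 1 + d • root (X ^ 2 - C a)) =
      (a * d) • 1 + c • root (X ^ 2 - C a) := by
  rw [mul_add, mul_smul_comm, mul_smul_comm, mul_one, root_mul_self_of_X_sq_sub_C, smul_smul]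
  module

theorem smul_one_add_smul_root_mul (c d c' d' : R) :
    (c • 1 + d • root (X ^ 2 - C a)) * (c' • 1 + d' • root (X ^ 2 - C a)) =
      (c * c' + a * d * d') • 1 + (c * d' + d * c') • root (X ^ 2 - C a) := by
  rw [add_mul, smul_mul_assoc, smul_mul_assoc, one_mul, root_mul_smul_one_add_smul_root]
  module

end AdjoinRoot

section Pairing

variable {R A : Type*} [CommRing R] [Ring A] [Algebra R A]

def traceMulPairing (ε : A →ₗ[R] R) (y z : A) : A ⊗[R] A →ₗ[R] R :=
  TensorProduct.lid R R ∘ₗ map (ε ∘ₗ LinearMap.mulRight R y) (ε ∘ₗ LinearMap.mulRight R z)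

@[simp]
theorem traceMulPairing_tmul (ε : A →ₗ[R] R) (y z u v : A) :
    traceMulPairing ε y z (u ⊗ₜ v) = ε (u * y) * ε (v * z) :=
  rfl

end Pairing

section SquareRoot

open AdjoinRoot

variable {R : Type*} [CommRing R] {a : R} (ε : AdjoinRoot (X ^ 2 - C a) →ₗ[R] R) (hε1 : ε 1 = 0)
  (hεroot : ε (root (X ^ 2 - C a)) = 1)
include hε1 hεroot

theorem apply_smul_one_add_smul_root (c d : R) : ε (c • 1 + d • root (X ^ 2 - C a)) = d := by
  simp [hε1, hεroot]

variable (Δ : AdjoinRoot (X ^ 2 - C a) →ₗ[R] AdjoinRoot (X ^ 2 - C a) ⊗[R] AdjoinRoot (X ^ 2 - C a))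

theorem traceMulPairing_comul_one
    (hΔ1 : Δ 1 = 1 ⊗ₜ root (X ^ 2 - C a) + root (X ^ 2 - C a) ⊗ₜ 1)
    (y z : AdjoinRoot (X ^ 2 - C a)) :
    traceMulPairing ε y z (Δ 1) = ε (y * z) := by
  obtain ⟨y₀, y₁, rfl⟩ := exists_eq_smul_one_add_smul_root a y
  obtain ⟨z₀, z₁, rfl⟩ := exists_eq_smul_one_add_smul_root a z
  simp only [hΔ1, map_add, traceMulPairing_tmul, one_mul, root_mul_smul_one_add_smul_root,
    smul_one_add_smul_root_mul, apply_smul_one_add_smul_root ε hε1 hεroot]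
  ring

theorem traceMulPairing_comul_root
    (hΔroot : Δ (root (X ^ 2 - C a)) =
      root (X ^ 2 - C a) ⊗ₜ root (X ^ 2 - C a) + a • ((1 : AdjoinRoot (X ^ 2 - C a)) ⊗ₜ 1))
    (y z : AdjoinRoot (X ^ 2 - C a)) :
    traceMulPairing ε y z (Δ (root (X ^ 2 - C a))) = ε (root (X ^ 2 - C a) * y * z) := by
  obtain ⟨y₀, y₁, rfl⟩ := exists_eq_smul_one_add_smul_root a y
  obtain ⟨z₀, z₁, rfl⟩ := exists_eq_smul_one_add_smul_root a z
  simp only [hΔroot, map_add, map_smul, traceMulPairing_tmul, one_mul, mul_assoc,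
    root_mul_smul_one_add_smul_root, smul_one_add_smul_root_mul,
    apply_smul_one_add_smul_root ε hε1 hεroot, smul_eq_mul]
  ring

theorem traceMulPairing_comul
    (hΔ1 : Δ 1 = 1 ⊗ₜ root (X ^ 2 - C a) + root (X ^ 2 - C a) ⊗ₜ 1)
    (hΔroot : Δ (root (X ^ 2 - C a)) =
      root (X ^ 2 - C a) ⊗ₜ root (X ^ 2 - C a) + a • ((1 : AdjoinRoot (X ^ 2 - C a)) ⊗ₜ 1))
    (x y z : AdjoinRoot (X ^ 2 - C a)) :
    traceMulPairing ε y z (Δ x) = ε (x * y * z) := by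
  obtain ⟨x₀, x₁, rfl⟩ := exists_eq_smul_one_add_smul_root a x
  simp only [map_add, map_smul, traceMulPairing_comul_one ε hε1 hεroot Δ hΔ1,
    traceMulPairing_comul_root ε hε1 hεroot Δ hΔroot, add_mul, smul_mul_assoc, one_mul]

end SquareRoot

/-- (Duality of comultiplication and multiplication via the trace) For the
trace `ε` (`ε(1) = 0`, `ε(X) = 1`) and the comultiplication `Δ`
(`Δ(1) = 1 ⊗ X + X ⊗ 1`, `Δ(X) = X ⊗ X + a·(1 ⊗ 1)`): for all `x, y, z ∈ A`,
applying to `Δ(x)` the `R`-linear map `A ⊗_R A → R` induced by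
`u ⊗ v ↦ ε(u·y)·ε(v·z)` yields `ε(x·y·z)`. -/
theorem comultiplication_dual_to_multiplication
    (ε : sl2A →ₗ[GaussR] GaussR)
    (hε1 : ε 1 = 0) (hεX : ε (AdjoinRoot.root sl2Poly) = 1)
    (Δ : sl2A →ₗ[GaussR] sl2A ⊗[GaussR] sl2A)
    (hΔ1 : Δ 1 = 1 ⊗ₜ AdjoinRoot.root sl2Poly + AdjoinRoot.root sl2Poly ⊗ₜ 1)
    (hΔX : Δ (AdjoinRoot.root sl2Poly) =
      AdjoinRoot.root sl2Poly ⊗ₜ AdjoinRoot.root sl2Poly +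
        (X : GaussR) • ((1 : sl2A) ⊗ₜ (1 : sl2A))) :
    ∀ x y z : sl2A,
      TensorProduct.lid GaussR GaussR
        (TensorProduct.map (ε ∘ₗ LinearMap.mulRight GaussR y)
          (ε ∘ₗ LinearMap.mulRight GaussR z) (Δ x)) = ε (x * y * z) :=
  traceMulPairing_comul ε hε1 hεX Δ hΔ1 hΔX
end

section
/- (Gaussian elimination) Let 𝒞 be an additive category and suppose given objects C, b₁, D, b₂, E, F of 𝒞 and morphisms α : C → b₁, β : C → D, φ : b₁ → b₂, δ : D → b₂, γ : b₁ → E, ε : D → E, μ : b₂ → F, ν : E → F such that φ is an isomorphism and such that the maps d¹ = (α, β)ᵗ : C → b₁ ⊕ D, d² = [[φ, δ], [γ, ε]] : b₁ ⊕ D → b₂ ⊕ E, d³ = (μ, ν) : b₂ ⊕ E → F satisfy d² ∘ d¹ = 0 and d³ ∘ d² = 0, giving a four-term cochain complex K supported in degrees 0,1,2,3. Then K is isomorphic to the direct sum of the contractible complex 0 → b₁ →^φ b₂ → 0 (supported in degrees 1 and 2) and the complex K' : 0 → C →^β D →^{ε − γ∘φ⁻¹∘δ} E →^ν F → 0 supported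 in degrees 0,1,2,3; in particular, K and K' are homotopy equivalent. -/
/-!
Since `φ` is invertible, the unipotent changes of basis `biprod.desc (𝟙 b₁) (δ ≫ inv φ)` of
`b₁ ⊞ D` and `biprod.lift (𝟙 b₂) (inv φ ≫ γ)` of `b₂ ⊞ E` (row and column operations clearing
`δ` and `γ`) turn the middle differential into `diag(φ, ε - δ ≫ inv φ ≫ γ)`. They commute with
the outer differentials because the relations `d² ∘ d¹ = 0` and `d³ ∘ d² = 0` express `α` and
`μ` through the other entries, so the complex splits as a biproduct of `0 → b₁ → b₂ → 0` and the
Schur complement complex. The first summand is contractible with contracting homotopy `inv φ`,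
and dropping a contractible summand is a homotopy equivalence.
-/

open CategoryTheory CategoryTheory.Limits ZeroObject

attribute [local instance] CategoryTheory.Limits.hasBinaryBiproducts_of_finite_biproducts

variable {𝒞 : Type*} [Category 𝒞] [Preadditive 𝒞] [HasFiniteBiproducts 𝒞]

/-- The objects of a cochain complex supported in degrees `0,1,2,3`. -/
noncomputable def fourObj (X0 X1 X2 X3 : 𝒞) : ℕ → 𝒞
  | 0 => X0
  | 1 => X1
  | 2 => X2
  | 3 => X3
  | _ => 0

/-- The differentials of a cochain complex supported in degrees `0,1,2,3`. -/
noncomputable def fourD {X0 X1 X2 X3 : 𝒞} (d0 : X0 ⟶ X1) (d1 : X1 ⟶ X2) (d2 : X2 ⟶ X3) :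
    ∀ n, fourObj X0 X1 X2 X3 n ⟶ fourObj X0 X1 X2 X3 (n + 1)
  | 0 => d0
  | 1 => d1
  | 2 => d2
  | (_ + 3) => 0

/-- The cochain complex `X0 → X1 → X2 → X3` supported in degrees `0,1,2,3`. -/
noncomputable def fourComplex {X0 X1 X2 X3 : 𝒞} (d0 : X0 ⟶ X1) (d1 : X1 ⟶ X2) (d2 : X2 ⟶ X3)
    (h01 : d0 ≫ d1 = 0) (h12 : d1 ≫ d2 = 0) : CochainComplex 𝒞 ℕ :=
  CochainComplex.of (fourObj X0 X1 X2 X3) (fourD d0 d1 d2) (by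
    rintro (_ | _ | _ | n)
    · exact h01
    · exact h12
    · exact comp_zero
    · exact zero_comp)

namespace HomotopyEquiv

variable {ι V : Type*} [Category V] [Preadditive V] {c : ComplexShape ι}

noncomputable def biprodOfHomotopyIdZero {A B : HomologicalComplex V c} [HasBinaryBiproduct A B]
    (h : Homotopy (𝟙 A) 0) : HomotopyEquiv (A ⊞ B) B where
  hom := biprod.snd
  inv := biprod.inr
  homotopyHomInvId := Homotopy.symm <|
    (Homotopy.ofEq (by simp [biprod.total])).trans <|
      (((h.compRight biprod.inl).compLeft biprod.fst).add
        (Homotopy.refl (biprod.snd ≫ biprod.inr))).trans (Homotopy.ofEq (by simp))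
  homotopyInvHomId := Homotopy.ofEq biprod.inr_snd

end HomotopyEquiv

section FourTermComplexes

variable {X0 X1 X2 X3 Y0 Y1 Y2 Y3 : 𝒞}
  {d0 : X0 ⟶ X1} {d1 : X1 ⟶ X2} {d2 : X2 ⟶ X3} {hd01 : d0 ≫ d1 = 0} {hd12 : d1 ≫ d2 = 0}
  {e0 : Y0 ⟶ Y1} {e1 : Y1 ⟶ Y2} {e2 : Y2 ⟶ Y3} {he01 : e0 ≫ e1 = 0} {he12 : e1 ≫ e2 = 0}

@[simp] lemma fourComplex_X_zero : (fourComplex d0 d1 d2 hd01 hd12).X 0 = X0 := rfl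

@[simp] lemma fourComplex_X_one : (fourComplex d0 d1 d2 hd01 hd12).X 1 = X1 := rfl

@[simp] lemma fourComplex_X_two : (fourComplex d0 d1 d2 hd01 hd12).X 2 = X2 := rfl

@[simp] lemma fourComplex_X_three : (fourComplex d0 d1 d2 hd01 hd12).X 3 = X3 := rfl

@[simp] lemma fourComplex_d_one_two : (fourComplex d0 d1 d2 hd01 hd12).d 1 2 = d1 :=
  CochainComplex.of_d (fourObj X0 X1 X2 X3) (fourD d0 d1 d2) 1

lemma fourComplex_hom_ext {K : CochainComplex 𝒞 ℕ} {f g : fourComplex d0 d1 d2 hd01 hd12 ⟶ K}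
    (h0 : f.f 0 = g.f 0) (h1 : f.f 1 = g.f 1) (h2 : f.f 2 = g.f 2) (h3 : f.f 3 = g.f 3) :
    f = g := by
  ext (_ | _ | _ | _ | n)
  exacts [h0, h1, h2, h3, (isZero_zero 𝒞).eq_of_src _ _]

noncomputable def fourMap (f0 : X0 ⟶ Y0) (f1 : X1 ⟶ Y1) (f2 : X2 ⟶ Y2) (f3 : X3 ⟶ Y3) :
    ∀ n, fourObj X0 X1 X2 X3 n ⟶ fourObj Y0 Y1 Y2 Y3 n
  | 0 => f0
  | 1 => f1
  | 2 => f2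
  | 3 => f3
  | _ + 4 => 0

noncomputable def fourHom (f0 : X0 ⟶ Y0) (f1 : X1 ⟶ Y1) (f2 : X2 ⟶ Y2) (f3 : X3 ⟶ Y3)
    (c0 : f0 ≫ e0 = d0 ≫ f1) (c1 : f1 ≫ e1 = d1 ≫ f2) (c2 : f2 ≫ e2 = d2 ≫ f3) :
    fourComplex d0 d1 d2 hd01 hd12 ⟶ fourComplex e0 e1 e2 he01 he12 :=
  CochainComplex.ofHom (fourMap f0 f1 f2 f3) (by
    rintro (_ | _ | _ | n) <;> dsimp only [fourComplex] <;>
      rw [CochainComplex.of_d, CochainComplex.of_d]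
    exacts [c0, c1, c2, (comp_zero).trans (zero_comp).symm])

section

variable (f0 : X0 ⟶ Y0) (f1 : X1 ⟶ Y1) (f2 : X2 ⟶ Y2) (f3 : X3 ⟶ Y3)
  (c0 : f0 ≫ e0 = d0 ≫ f1) (c1 : f1 ≫ e1 = d1 ≫ f2) (c2 : f2 ≫ e2 = d2 ≫ f3)

@[simp] lemma fourHom_f_zero :
    (fourHom (hd01 := hd01) (hd12 := hd12) (he01 := he01) (he12 := he12)
      f0 f1 f2 f3 c0 c1 c2).f 0 = f0 := rfl

@[simp] lemma fourHom_f_one :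
    (fourHom (hd01 := hd01) (hd12 := hd12) (he01 := he01) (he12 := he12)
      f0 f1 f2 f3 c0 c1 c2).f 1 = f1 := rfl

@[simp] lemma fourHom_f_two :
    (fourHom (hd01 := hd01) (hd12 := hd12) (he01 := he01) (he12 := he12)
      f0 f1 f2 f3 c0 c1 c2).f 2 = f2 := rfl

@[simp] lemma fourHom_f_three :
    (fourHom (hd01 := hd01) (hd12 := hd12) (he01 := he01) (he12 := he12)
      f0 f1 f2 f3 c0 c1 c2).f 3 = f3 := rfl

end

end FourTermComplexes

section BlockMatrices

variable {V : Type*} [Category V] [Preadditive V] {C b₁ D b₂ E F : V}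
  {α : C ⟶ b₁} {β : C ⟶ D} {φ : b₁ ⟶ b₂} {δ : D ⟶ b₂} {γ : b₁ ⟶ E}
  {ε : D ⟶ E} {μ : b₂ ⟶ F} {ν : E ⟶ F}

lemma biprod.lift_comp_desc_lift_eq_zero_iff [HasBinaryBiproduct b₁ D] [HasBinaryBiproduct b₂ E] :
    biprod.lift α β ≫ biprod.desc (biprod.lift φ γ) (biprod.lift δ ε) = 0 ↔
      α ≫ φ + β ≫ δ = 0 ∧ α ≫ γ + β ≫ ε = 0 := by
  refine ⟨fun h => ⟨by simpa using h =≫ biprod.fst, by simpa using h =≫ biprod.snd⟩,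
    fun ⟨h₁, h₂⟩ => biprod.hom_ext _ _ ?_ ?_⟩ <;> simpa

lemma biprod.desc_lift_comp_desc_eq_zero_iff [HasBinaryBiproduct b₁ D] [HasBinaryBiproduct b₂ E] :
    biprod.desc (biprod.lift φ γ) (biprod.lift δ ε) ≫ biprod.desc μ ν = 0 ↔
      φ ≫ μ + γ ≫ ν = 0 ∧ δ ≫ μ + ε ≫ ν = 0 := by
  refine ⟨fun h => ⟨by simpa using biprod.inl ≫= h, by simpa using biprod.inr ≫= h⟩,
    fun ⟨h₁, h₂⟩ => biprod.hom_ext' _ _ ?_ ?_⟩ <;> simpa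

lemma biprod.desc_comp_inl_add_snd_comp_lift {X Y : V} [HasBinaryBiproduct X Y] (g : Y ⟶ X) :
    biprod.desc (𝟙 X) g ≫ biprod.inl + biprod.snd ≫ biprod.lift (-g) (𝟙 Y) = 𝟙 (X ⊞ Y) := by
  ext <;> simp

lemma biprod.fst_comp_lift_add_desc_comp_inr {X Y : V} [HasBinaryBiproduct X Y] (g : X ⟶ Y) :
    biprod.fst ≫ biprod.lift (𝟙 X) g + biprod.desc (-g) (𝟙 Y) ≫ biprod.inr = 𝟙 (X ⊞ Y) := by
  ext <;> simp

variable [IsIso φ]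

lemma eq_neg_comp_inv_of_add_comp_eq_zero (h : α ≫ φ + β ≫ δ = 0) : α = -β ≫ δ ≫ inv φ := by
  simpa using eq_neg_of_add_eq_zero_left (by simpa using h =≫ inv φ)

lemma comp_schurComplement_eq_zero (h₁ : α ≫ φ + β ≫ δ = 0) (h₂ : α ≫ γ + β ≫ ε = 0) :
    β ≫ (ε - δ ≫ inv φ ≫ γ) = 0 := by
  rw [eq_neg_comp_inv_of_add_comp_eq_zero h₁] at h₂
  simpa [sub_eq_add_neg, add_comm] using h₂

lemma schurComplement_comp_eq_zero (h₁ : φ ≫ μ + γ ≫ ν = 0) (h₂ : δ ≫ μ + ε ≫ ν = 0) :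
    (ε - δ ≫ inv φ ≫ γ) ≫ ν = 0 := by
  rw [Preadditive.sub_comp, Category.assoc, Category.assoc, eq_neg_of_add_eq_zero_right h₁]
  simpa [add_comm] using h₂

end BlockMatrices

noncomputable abbrev twoTermComplex {X Y : 𝒞} (φ : X ⟶ Y) : CochainComplex 𝒞 ℕ :=
  fourComplex (0 : (0 : 𝒞) ⟶ X) φ (0 : Y ⟶ (0 : 𝒞)) zero_comp comp_zero

noncomputable def twoTermComplex.homotopyIdZero {X Y : 𝒞} (φ : X ⟶ Y) [IsIso φ] :
    Homotopy (𝟙 (twoTermComplex φ)) 0 :=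
  Homotopy.mkCoinductive _ 0 ((isZero_zero 𝒞).eq_of_src _ _) (inv φ : Y ⟶ X)
    (by rw [zero_comp, zero_add, fourComplex_d_one_two]; exact (IsIso.hom_inv_id φ).symm)
    (by
      rintro (_ | _ | n) p
      -- the homotopy `Y ⟶ X` is forced to be a right inverse of `φ`, hence also a left inverse
      · obtain ⟨f, (f' : Y ⟶ X), hf'⟩ := p
        have hf : f = 0 := (isZero_zero 𝒞).eq_of_tgt _ _
        simp only [hf, zero_comp, zero_add, HomologicalComplex.id_f] at hf'
        replace hf' : 𝟙 X = (twoTermComplex φ).d 1 2 ≫ f' := hf'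
        rw [fourComplex_d_one_two] at hf'
        refine ⟨0, ?_⟩
        simp only [HomologicalComplex.id_f, comp_zero, add_zero]
        rw [show (twoTermComplex φ).d (0 + 1) (0 + 2) = φ from fourComplex_d_one_two,
          ← IsIso.inv_eq_of_hom_inv_id (f := φ) hf'.symm]
        exact (IsIso.inv_hom_id φ).symm
      · exact ⟨0, (isZero_zero 𝒞).eq_of_src _ _⟩
      · exact ⟨0, (isZero_zero 𝒞).eq_of_src _ _⟩)

namespace GaussianElimination

variable {C b₁ D b₂ E F : 𝒞} {α : C ⟶ b₁} {β : C ⟶ D} {φ : b₁ ⟶ b₂} {δ : D ⟶ b₂} {γ : b₁ ⟶ E}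
  {ε : D ⟶ E} {μ : b₂ ⟶ F} {ν : E ⟶ F} [IsIso φ]
  (h21 : biprod.lift α β ≫ biprod.desc (biprod.lift φ γ) (biprod.lift δ ε) = 0)
  (h32 : biprod.desc (biprod.lift φ γ) (biprod.lift δ ε) ≫ biprod.desc μ ν = 0)

noncomputable abbrev blockComplex : CochainComplex 𝒞 ℕ :=
  fourComplex (biprod.lift α β) (biprod.desc (biprod.lift φ γ) (biprod.lift δ ε))
    (biprod.desc μ ν) h21 h32

noncomputable abbrev schurComplex : CochainComplex 𝒞 ℕ :=
  fourComplex β (ε - δ ≫ inv φ ≫ γ) ν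
    (comp_schurComplement_eq_zero (biprod.lift_comp_desc_lift_eq_zero_iff.1 h21).1
      (biprod.lift_comp_desc_lift_eq_zero_iff.1 h21).2)
    (schurComplement_comp_eq_zero (biprod.desc_lift_comp_desc_eq_zero_iff.1 h32).1
      (biprod.desc_lift_comp_desc_eq_zero_iff.1 h32).2)

noncomputable def fst : blockComplex h21 h32 ⟶ twoTermComplex φ :=
  fourHom 0 (biprod.desc (𝟙 b₁) (δ ≫ inv φ)) biprod.fst 0
    (by
      have hα :=
        eq_neg_comp_inv_of_add_comp_eq_zero (biprod.lift_comp_desc_lift_eq_zero_iff.1 h21).1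
      simp [hα])
    (by ext <;> simp) (by simp)

noncomputable def inl : twoTermComplex φ ⟶ blockComplex h21 h32 :=
  fourHom 0 biprod.inl (biprod.lift (𝟙 b₂) (inv φ ≫ γ)) 0 (by simp) (by ext <;> simp)
    (by
      have hγν := eq_neg_of_add_eq_zero_right (biprod.desc_lift_comp_desc_eq_zero_iff.1 h32).1
      simp [hγν])

noncomputable def snd : blockComplex h21 h32 ⟶ schurComplex h21 h32 :=
  fourHom (𝟙 C) biprod.snd (biprod.desc (-(inv φ ≫ γ)) (𝟙 E)) (𝟙 F) (by simp)
    (by ext <;> simp; abel)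
    (by
      have hγν := eq_neg_of_add_eq_zero_right (biprod.desc_lift_comp_desc_eq_zero_iff.1 h32).1
      ext <;> simp [hγν])

noncomputable def inr : schurComplex h21 h32 ⟶ blockComplex h21 h32 :=
  fourHom (𝟙 C) (biprod.lift (-(δ ≫ inv φ)) (𝟙 D)) biprod.inr (𝟙 F)
    (by
      have hα :=
        eq_neg_comp_inv_of_add_comp_eq_zero (biprod.lift_comp_desc_lift_eq_zero_iff.1 h21).1
      ext <;> simp [hα])
    (by ext <;> simp; abel) (by simp)

lemma inl_fst : inl h21 h32 ≫ fst h21 h32 = 𝟙 _ := by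
  apply fourComplex_hom_ext <;> simp [fst, inl, id_zero]

lemma inl_snd : inl h21 h32 ≫ snd h21 h32 = 0 := by
  apply fourComplex_hom_ext <;> simp [snd, inl] <;> rfl

lemma inr_fst : inr h21 h32 ≫ fst h21 h32 = 0 := by
  apply fourComplex_hom_ext <;> simp [fst, inr] <;> rfl

lemma inr_snd : inr h21 h32 ≫ snd h21 h32 = 𝟙 _ := by
  apply fourComplex_hom_ext <;> simp [snd, inr]

lemma total : fst h21 h32 ≫ inl h21 h32 + snd h21 h32 ≫ inr h21 h32 = 𝟙 _ := by
  apply fourComplex_hom_ext <;> simp [fst, inl, snd, inr]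
  · exact zero_add _
  · exact biprod.desc_comp_inl_add_snd_comp_lift _
  · exact biprod.fst_comp_lift_add_desc_comp_inr _
  · exact zero_add _

noncomputable def bicone : BinaryBicone (twoTermComplex φ) (schurComplex h21 h32) where
  pt := blockComplex h21 h32
  fst := fst h21 h32
  snd := snd h21 h32
  inl := inl h21 h32
  inr := inr h21 h32
  inl_fst := inl_fst h21 h32
  inl_snd := inl_snd h21 h32
  inr_fst := inr_fst h21 h32
  inr_snd := inr_snd h21 h32

noncomputable def iso : blockComplex h21 h32 ≅ twoTermComplex φ ⊞ schurComplex h21 h32 :=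
  biprod.uniqueUpToIso _ _ (isBinaryBilimitOfTotal (bicone h21 h32) (total h21 h32))

noncomputable def homotopyEquiv : HomotopyEquiv (blockComplex h21 h32) (schurComplex h21 h32) :=
  (HomotopyEquiv.ofIso (iso h21 h32)).trans
    (HomotopyEquiv.biprodOfHomotopyIdZero (twoTermComplex.homotopyIdZero φ))

end GaussianElimination

/-- (Gaussian elimination) Given a four-term cochain complex
`C → b₁ ⊞ D → b₂ ⊞ E → F` (supported in degrees 0,1,2,3) whose middle
differential has matrix `[[φ, δ], [γ, ε]]` with `φ : b₁ ⟶ b₂` an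
isomorphism, the complex is isomorphic to the direct sum of the contractible
complex `0 → b₁ → b₂ → 0` (supported in degrees 1, 2) and the complex
`C → D → E → F` with middle differential `ε − γ ∘ φ⁻¹ ∘ δ`; in particular
the two four-term complexes are homotopy equivalent. -/
theorem gaussian_elimination
    (C b₁ D b₂ E F : 𝒞)
    (α : C ⟶ b₁) (β : C ⟶ D) (φ : b₁ ⟶ b₂) (δ : D ⟶ b₂) (γ : b₁ ⟶ E) (ε : D ⟶ E)
    (μ : b₂ ⟶ F) (ν : E ⟶ F) [IsIso φ]
    (h21 : biprod.lift α β ≫ biprod.desc (biprod.lift φ γ) (biprod.lift δ ε) = 0)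
    (h32 : biprod.desc (biprod.lift φ γ) (biprod.lift δ ε) ≫ biprod.desc μ ν = 0) :
    let K : CochainComplex 𝒞 ℕ :=
      fourComplex (biprod.lift α β) (biprod.desc (biprod.lift φ γ) (biprod.lift δ ε))
        (biprod.desc μ ν) h21 h32
    let Kcontr : CochainComplex 𝒞 ℕ :=
      fourComplex (0 : (0 : 𝒞) ⟶ b₁) φ (0 : b₂ ⟶ (0 : 𝒞)) zero_comp comp_zero
    let K' : CochainComplex 𝒞 ℕ :=
      fourComplex β (ε - δ ≫ inv φ ≫ γ) ν
        (by
          have h1 : α ≫ φ + β ≫ δ = 0 := by simpa using h21 =≫ biprod.fst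
          have h2 : α ≫ γ + β ≫ ε = 0 := by simpa using h21 =≫ biprod.snd
          have hβδ : β ≫ δ = -(α ≫ φ) := (neg_eq_of_add_eq_zero_right h1).symm
          have hβε : β ≫ ε = -(α ≫ γ) := (neg_eq_of_add_eq_zero_right h2).symm
          calc β ≫ (ε - δ ≫ inv φ ≫ γ)
              = β ≫ ε - (β ≫ δ) ≫ inv φ ≫ γ := by
                rw [Preadditive.comp_sub, ← Category.assoc]
            _ = -(α ≫ γ) - (-(α ≫ φ)) ≫ inv φ ≫ γ := by rw [hβδ, hβε]
            _ = 0 := by simp)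
        (by
          have h3 : φ ≫ μ + γ ≫ ν = 0 := by simpa using biprod.inl ≫= h32
          have h4 : δ ≫ μ + ε ≫ ν = 0 := by simpa using biprod.inr ≫= h32
          have hγν : γ ≫ ν = -(φ ≫ μ) := (neg_eq_of_add_eq_zero_right h3).symm
          have hεν : ε ≫ ν = -(δ ≫ μ) := (neg_eq_of_add_eq_zero_right h4).symm
          calc (ε - δ ≫ inv φ ≫ γ) ≫ ν
              = ε ≫ ν - δ ≫ inv φ ≫ γ ≫ ν := by
                simp only [Preadditive.sub_comp, Category.assoc]
            _ = -(δ ≫ μ) - δ ≫ inv φ ≫ (-(φ ≫ μ)) := by rw [hγν, hεν]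
            _ = 0 := by simp)
    Nonempty (K ≅ Kcontr ⊞ K') ∧ Nonempty (HomotopyEquiv K K') := by
  intro K Kcontr K'
  exact ⟨⟨GaussianElimination.iso h21 h32⟩, ⟨GaussianElimination.homotopyEquiv h21 h32⟩⟩
end

section
/- Let A, C₁, C₂ be cochain complexes in a preadditive category with binary biproducts, and let g₁ : C₁ ⟶ A be a strong deformation retract with inclusion f₁ : A ⟶ C₁. Then for every chain map ψ : C₁ ⟶ C₂, the mapping cones M(ψ ∘ f₁) and M(ψ) are homotopy equivalent. -/
open CategoryTheory CategoryTheory.Limits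

/-- `g : C ⟶ A` is a strong deformation retract with inclusion `f : A ⟶ C`:
`g ∘ f = id_A` and there is a homotopy `h` with `id_C − f ∘ g = dh + hd`,
`h ∘ f = 0` and `g ∘ h = 0`. -/
structure StrongDeformationRetract {𝒜 : Type*} [Category 𝒜] [Preadditive 𝒜]
    {C A : CochainComplex 𝒜 ℤ} (g : C ⟶ A) (f : A ⟶ C) : Prop where
  gf : f ≫ g = 𝟙 A
  homotopy : ∃ h : Homotopy (𝟙 C) (g ≫ f),
    (∀ i j, f.f i ≫ h.hom i j = 0) ∧ (∀ i j, h.hom i j ≫ g.f j = 0)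

open CochainComplex HomComplex mappingCone

/-- The mapping cone construction is invariant up to homotopy under
precomposition with the inclusion of a strong deformation retract: if
`g₁ : C₁ ⟶ A` is a strong deformation retract with inclusion `f₁ : A ⟶ C₁`,
then for any chain map `ψ : C₁ ⟶ C₂` the mapping cones `M(ψ ∘ f₁)` and
`M(ψ)` are homotopy equivalent. -/
theorem mappingCone_invariant_precomp_inclusion_of_sdr
    {𝒜 : Type*} [Category 𝒜] [Preadditive 𝒜] [HasBinaryBiproducts 𝒜]
    (A C₁ C₂ : CochainComplex 𝒜 ℤ)
    (g₁ : C₁ ⟶ A) (f₁ : A ⟶ C₁) (sdr : StrongDeformationRetract g₁ f₁)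
    (ψ : C₁ ⟶ C₂) :
    Nonempty (HomotopyEquiv (CochainComplex.mappingCone (f₁ ≫ ψ))
      (CochainComplex.mappingCone ψ)) := by
  obtain ⟨h, hf, hg⟩ := sdr.homotopy
  set χ : Cochain C₁ C₁ (-1) := Cochain.ofHomotopy h with hχdef
  have hδχ : δ (-1) 0 χ = Cochain.ofHom (𝟙 C₁) - Cochain.ofHom (g₁ ≫ f₁) :=
    δ_ofHomotopy h
  have hfχ : ∀ (p q : ℤ) (hpq : p + (-1) = q), f₁.f p ≫ χ.v p q hpq = 0 := by
    intro p q hpq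
    exact hf p q
  -- The forward map
  have eqF : δ (-1) 0 ((Cochain.ofHom f₁).comp (inl ψ) (zero_add (-1))) =
      Cochain.ofHom ((f₁ ≫ ψ) ≫ inr ψ) := by
    rw [δ_zero_cochain_comp _ _ 0 (neg_add_cancel 1), δ_inl, δ_ofHom]
    simp only [Cochain.zero_comp, smul_zero, add_zero, ← Cochain.ofHom_comp,
      Category.assoc]
  let F : mappingCone (f₁ ≫ ψ) ⟶ mappingCone ψ :=
    mappingCone.desc (f₁ ≫ ψ) ((Cochain.ofHom f₁).comp (inl ψ) (zero_add (-1)))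
      (inr ψ) eqF
  -- The backward map
  have eqα : δ (-1) 0 ((Cochain.ofHom g₁).comp (inl (f₁ ≫ ψ)) (zero_add (-1)) +
      (χ.comp (Cochain.ofHom ψ) (add_zero (-1))).comp
        (Cochain.ofHom (inr (f₁ ≫ ψ))) (add_zero (-1))) =
      Cochain.ofHom (ψ ≫ inr (f₁ ≫ ψ)) := by
    rw [δ_add, δ_zero_cochain_comp _ _ 0 (neg_add_cancel 1),
      δ_comp_zero_cochain _ _ 0 (neg_add_cancel 1),
      δ_comp_zero_cochain _ _ 0 (neg_add_cancel 1)]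
    simp only [δ_inl, δ_ofHom, Cochain.comp_zero, Cochain.zero_comp, smul_zero,
      add_zero, zero_add, hδχ, Cochain.sub_comp, Cochain.ofHom_comp,
      Cochain.comp_assoc_of_first_is_zero_cochain, Cochain.id_comp]
    abel
  let G : mappingCone ψ ⟶ mappingCone (f₁ ≫ ψ) :=
    mappingCone.desc ψ ((Cochain.ofHom g₁).comp (inl (f₁ ≫ ψ)) (zero_add (-1)) +
      (χ.comp (Cochain.ofHom ψ) (add_zero (-1))).comp
        (Cochain.ofHom (inr (f₁ ≫ ψ))) (add_zero (-1))) (inr (f₁ ≫ ψ)) eqα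
  have hFG : F ≫ G = 𝟙 _ := by
    ext n
    rw [ext_from_iff (f₁ ≫ ψ) (n + 1) n rfl]
    constructor
    · have hgf := congrArg (fun (u : A ⟶ A) => u.f (n + 1)) sdr.gf
      dsimp at hgf
      have hfχ' : ∀ {Z : 𝒜} (u : (C₁.X n) ⟶ Z),
          f₁.f (n + 1) ≫ χ.v (n + 1) n (by omega) ≫ u = 0 := by
        intro Z u
        rw [← Category.assoc, hfχ, zero_comp]
      simp only [F, G, HomologicalComplex.comp_f,
        inl_v_desc_f_assoc, Cochain.zero_cochain_comp_v, Cochain.ofHom_v,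
        Category.assoc, inl_v_desc_f, Cochain.add_v,
        Cochain.comp_zero_cochain_v, Preadditive.comp_add, hfχ',
        HomologicalComplex.id_f, Category.comp_id, add_zero]
      rw [← Category.assoc, hgf, Category.id_comp]
    · simp [F, G]
  -- the homotopy for G ≫ F
  let z : Cochain (mappingCone ψ) (mappingCone ψ) (-1) :=
    (fst ψ).1.comp (χ.comp (inl ψ) (show (-1) + (-1) = (-2:ℤ) by norm_num))
      (show (1:ℤ) + (-2) = -1 by norm_num)
  have hδz : δ (-1) 0 z =
      (fst ψ).1.comp (χ.comp (Cochain.ofHom (ψ ≫ inr ψ)) (add_zero (-1)))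
          (show (1:ℤ) + (-1) = 0 by norm_num) -
        (fst ψ).1.comp ((Cochain.ofHom (𝟙 C₁) - Cochain.ofHom (g₁ ≫ f₁)).comp
          (inl ψ) (zero_add (-1))) (show (1:ℤ) + (-1) = 0 by norm_num) := by
    rw [show z = (fst ψ).1.comp (χ.comp (inl ψ)
        (show (-1) + (-1) = (-2:ℤ) by norm_num)) (show (1:ℤ) + (-2) = -1 by norm_num)
        from rfl,
      δ_comp (fst ψ).1 _ _ 2 (-1) 0 (by norm_num) (by norm_num) (by norm_num),
      Cocycle.δ_eq_zero, Cochain.zero_comp, smul_zero, add_zero,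
      δ_comp χ (inl ψ) _ 0 0 (-1) (by norm_num) (by norm_num) (by norm_num),
      δ_inl, hδχ]
    simp only [Int.negOnePow_neg, Int.negOnePow_one, Units.neg_smul, one_smul,
      Cochain.comp_add, Cochain.comp_neg, sub_eq_add_neg]
  have hz : Cochain.ofHom (G ≫ F) = δ (-1) 0 z + Cochain.ofHom (𝟙 _) := by
    rw [Cochain.ofHom_comp, show Cochain.ofHom G = descCochain ψ
        ((Cochain.ofHom g₁).comp (inl (f₁ ≫ ψ)) (zero_add (-1)) +
          (χ.comp (Cochain.ofHom ψ) (add_zero (-1))).comp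
            (Cochain.ofHom (inr (f₁ ≫ ψ))) (add_zero (-1)))
        (Cochain.ofHom (inr (f₁ ≫ ψ))) (neg_add_cancel 1) from ofHom_desc ψ _ _ eqα,
      hδz, ← mappingCone.id ψ]
    dsimp only [descCochain]
    have hinlF : (inl (f₁ ≫ ψ)).comp (Cochain.ofHom F) (add_zero (-1)) =
        (Cochain.ofHom f₁).comp (inl ψ) (zero_add (-1)) := inl_desc _ _ _ _
    have hinrF : inr (f₁ ≫ ψ) ≫ F = inr ψ := inr_desc _ _ _ _
    simp only [Cochain.add_comp, Cochain.comp_assoc_of_third_is_zero_cochain,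
      Cochain.comp_assoc_of_first_is_zero_cochain,
      Cochain.comp_assoc_of_second_is_zero_cochain, ← Cochain.ofHom_comp,
      hinlF, hinrF, Cochain.sub_comp, Cochain.id_comp, Cochain.comp_add,
      Cochain.comp_sub, Cochain.ofHom_comp]
    simp only [← Cochain.ofHom_comp, hinrF]
    abel
  exact ⟨{
    hom := F
    inv := G
    homotopyHomInvId := Homotopy.ofEq hFG
    homotopyInvHomId := (Cochain.equivHomotopy _ _).symm ⟨z, hz⟩ }⟩
end

section
/- Let C₁, C₂, B be cochain complexes in a preadditive category with binary biproducts, and let g₂ : C₂ ⟶ B be a strong deformation retract with inclusion f₂ : B ⟶ C₂. Then for every chain map ψ : C₁ ⟶ C₂, the mapping cones M(g₂ ∘ ψ) and M(ψ) are homotopy equivalent. -/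
open CategoryTheory CategoryTheory.Limits

namespace MappingConeSDRAux

open CochainComplex CochainComplex.mappingCone CochainComplex.HomComplex

variable {𝒜 : Type*} [Category 𝒜] [Preadditive 𝒜] [HasBinaryBiproducts 𝒜]
  {C₁ C₂ B : CochainComplex 𝒜 ℤ}
  {g₂ : C₂ ⟶ B} {f₂ : B ⟶ C₂} (ψ : C₁ ⟶ C₂)
  (hgf : f₂ ≫ g₂ = 𝟙 B) (h : Homotopy (𝟙 C₂) (g₂ ≫ f₂))
  (hg : ∀ i j, h.hom i j ≫ g₂.f j = 0)

/-- The homotopy making the square `(𝟙 C₁, f₂)` commute up to homotopy. -/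
noncomputable def sq : Homotopy ((ψ ≫ g₂) ≫ f₂) (𝟙 C₁ ≫ ψ) :=
  (Cochain.equivHomotopy _ _).symm
    ⟨-(Cochain.ofHom ψ).comp (Cochain.ofHomotopy h) (zero_add (-1)), by
      simp only [δ_neg,
        δ_zero_cochain_comp (Cochain.ofHom ψ) (Cochain.ofHomotopy h) 0 (by norm_num),
        δ_ofHom, Cochain.zero_comp, smul_zero, add_zero, δ_ofHomotopy,
        Cochain.comp_sub, ← Cochain.ofHom_comp, Category.comp_id, Category.id_comp,
        Category.assoc]
      abel⟩

/-- `F : mappingCone (ψ ≫ g₂) ⟶ mappingCone ψ`. -/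
noncomputable def F : mappingCone (ψ ≫ g₂) ⟶ mappingCone ψ :=
  mapOfHomotopy (sq ψ h)

/-- `G : mappingCone ψ ⟶ mappingCone (ψ ≫ g₂)`. -/
noncomputable def G (g₂ : C₂ ⟶ B) : mappingCone ψ ⟶ mappingCone (ψ ≫ g₂) :=
  mappingCone.map ψ (ψ ≫ g₂) (𝟙 C₁) g₂ (by simp)

omit [HasBinaryBiproducts 𝒜] in
lemma hsq : ((Cochain.equivHomotopy _ _) (sq ψ h)).1 =
    -(Cochain.ofHom ψ).comp (Cochain.ofHomotopy h) (zero_add (-1)) := by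
  simp [sq]

omit [HasBinaryBiproducts 𝒜] in
lemma sq_hom (i j : ℤ) (hij : i + (-1) = j) :
    (sq ψ h).hom i j = -(ψ.f i ≫ h.hom i j) := by
  dsimp [sq, Cochain.equivHomotopy]
  rw [dif_pos hij]
  simp [Cochain.ofHomotopy, Cochain.comp_v _ _ (zero_add (-1)) i i j (by omega) (by omega)]

lemma inr_G : inr ψ ≫ G ψ g₂ = g₂ ≫ inr (ψ ≫ g₂) := by
  simp [G, mappingCone.map]

lemma inr_F : inr (ψ ≫ g₂) ≫ F ψ h = f₂ ≫ inr ψ :=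
  triangleMapOfHomotopy_comm₂ _

include hgf hg in
lemma FG : F ψ h ≫ G ψ g₂ = 𝟙 _ := by
  have hg' : ∀ i j (W : 𝒜) (w : B.X j ⟶ W), h.hom i j ≫ g₂.f j ≫ w = 0 := by
    intro i j W w
    rw [← Category.assoc, hg, zero_comp]
  have hgf' : ∀ n (W : 𝒜) (w : B.X n ⟶ W), f₂.f n ≫ g₂.f n ≫ w = w := by
    intro n W w
    rw [← Category.assoc, ← HomologicalComplex.comp_f, hgf,
      HomologicalComplex.id_f, Category.id_comp]
  ext n
  simp [ext_from_iff _ (n + 1) n rfl, F, G, mapOfHomotopy, mappingCone.map, hsq,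
    Cochain.comp_v _ _ (zero_add (-1)) (n + 1) (n + 1) n (by omega) (by omega),
    Cochain.ofHomotopy, hg', hgf', sq_hom ψ h (n + 1) n (by omega)]

include hg in
/-- The homotopy `G ≫ F ≃ 𝟙`. -/
noncomputable def GF : Homotopy (G ψ g₂ ≫ F ψ h) (𝟙 (mappingCone ψ)) := by
  have hz : δ (-1) 0 (Cochain.ofHomotopy h) =
      Cochain.ofHom (𝟙 C₂) - Cochain.ofHom (g₂ ≫ f₂) := δ_ofHomotopy h
  refine descHomotopy ψ _ _ 0
    (-(Cochain.ofHomotopy h).comp (Cochain.ofHom (inr ψ)) (add_zero (-1))) ?_ ?_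
  · ext p q hpq
    simp [F, G, mapOfHomotopy, mappingCone.map, hsq, Cochain.ofHomotopy,
      sq_hom ψ h p q (by omega),
      Cochain.comp_v _ _ (add_zero (-1)) p q q (by omega) (by omega),
      Cochain.comp_v _ _ (zero_add (-1)) p p q (by omega) (by omega)]
    abel
  · rw [← Category.assoc, inr_G, Category.assoc, inr_F]
    simp only [δ_neg, δ_comp_ofHom, hz, Cochain.sub_comp, neg_sub,
      ← Cochain.ofHom_comp, Category.assoc, Category.id_comp, neg_smul, one_smul]
    simp

end MappingConeSDRAux

/-- The mapping cone construction is invariant up to homotopy under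
postcomposition with a strong deformation retract: if `g₂ : C₂ ⟶ B` is a
strong deformation retract with inclusion `f₂ : B ⟶ C₂`, then for any chain
map `ψ : C₁ ⟶ C₂` the mapping cones `M(g₂ ∘ ψ)` and `M(ψ)` are homotopy
equivalent. -/
theorem mappingCone_invariant_postcomp_sdr
    {𝒜 : Type*} [Category 𝒜] [Preadditive 𝒜] [HasBinaryBiproducts 𝒜]
    (C₁ C₂ B : CochainComplex 𝒜 ℤ)
    (g₂ : C₂ ⟶ B) (f₂ : B ⟶ C₂) (sdr : StrongDeformationRetract g₂ f₂)
    (ψ : C₁ ⟶ C₂) :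
    Nonempty (HomotopyEquiv (CochainComplex.mappingCone (ψ ≫ g₂))
      (CochainComplex.mappingCone ψ)) := by
  obtain ⟨h, hf, hg⟩ := sdr.homotopy
  exact ⟨{
    hom := MappingConeSDRAux.F ψ h
    inv := MappingConeSDRAux.G ψ g₂
    homotopyHomInvId := Homotopy.ofEq (MappingConeSDRAux.FG ψ sdr.gf h hg)
    homotopyInvHomId := MappingConeSDRAux.GF ψ h }⟩
end
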